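/- arXiv:1710.05234 — 5 statements merged into one kernel-verified Lean document; each statement's English description precedes it below -/
import Mathlib

section
/- For every α > 2, the equation θ·cos²θ + (1 + 3sin²θ)·arctan(sinθ·cosθ/(1 + sin²θ)) = 2·sinθ·cosθ + (π/α)·sin²θ·cos²θ has exactly one solution θ in the open interval (0, π/2). -/
/-- The defining equation for `θ*_α` in the PhaseLamp analysis. -/
def phaseLampEq (α θ : ℝ) : Prop :=
  θ * Real.cos θ ^ 2 +
      (1 + 3 * Real.sin θ ^ 2) *
        Real.arctan (Real.sin θ * Real.cos θ / (1 + Real.sin θ ^ 2)) =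
    2 * Real.sin θ * Real.cos θ +
      (Real.pi / α) * Real.sin θ ^ 2 * Real.cos θ ^ 2

/-!
Let `F = residual α` be the difference of the two sides of the equation. Then `F(0) = F(π/2) = 0`
and `F'(θ) = sin 2θ · G(θ)` with `G = residualFactor α`, and in turn
`G'(θ) = sin 2θ · (K(θ) + 2π/α)`, where `K = residualFactorDerivQuot` is strictly decreasing on
`(0, π/2)`; so `G` first increases and then decreases. As `G(0) = -π/α < 0`,
`G(π/2) = π/α - π/2 < 0` for `α > 2` and `G(π/4) = 3 arctan (1/3) - π/4 > 0`, the function `G` is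
negative, positive, negative on three consecutive intervals. So `F` decreases, increases,
decreases, and vanishing at both ends it has exactly one zero in between.
-/

open Real Set

section SignPatterns

variable {f f' : ℝ → ℝ} {p q : ℝ}

lemma strictMonoOn_Icc_of_hasDerivAt_pos (hf : ∀ x, HasDerivAt f (f' x) x)
    (hf' : ∀ x ∈ Ioo p q, 0 < f' x) : StrictMonoOn f (Icc p q) :=
  strictMonoOn_of_hasDerivWithinAt_pos (convex_Icc p q)
    (HasDerivAt.continuousOn fun x _ => hf x)
    (fun x _ => (hf x).hasDerivWithinAt) (by simpa only [interior_Icc] using hf')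

lemma strictAntiOn_Icc_of_hasDerivAt_neg (hf : ∀ x, HasDerivAt f (f' x) x)
    (hf' : ∀ x ∈ Ioo p q, f' x < 0) : StrictAntiOn f (Icc p q) :=
  strictAntiOn_of_hasDerivWithinAt_neg (convex_Icc p q)
    (HasDerivAt.continuousOn fun x _ => hf x)
    (fun x _ => (hf x).hasDerivWithinAt) (by simpa only [interior_Icc] using hf')

lemma exists_pos_neg_of_eq_mul_strictAntiOn {g w h : ℝ → ℝ} (hpq : p ≤ q)
    (hg : ContinuousOn g (Icc p q)) (hp : 0 < g p) (hq : g q < 0)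
    (hw : ∀ x ∈ Ioo p q, 0 < w x) (hgwh : ∀ x ∈ Ioo p q, g x = w x * h x)
    (hh : StrictAntiOn h (Ioo p q)) :
    ∃ z ∈ Ioo p q, (∀ x ∈ Ioo p z, 0 < g x) ∧ ∀ x ∈ Ioo z q, g x < 0 := by
  obtain ⟨z, hz, hgz⟩ := intermediate_value_Icc' hpq hg ⟨hq.le, hp.le⟩
  have hzpq : z ∈ Ioo p q :=
    ⟨hz.1.lt_of_ne (by rintro rfl; linarith), hz.2.lt_of_ne (by rintro rfl; linarith)⟩
  have hhz : h z = 0 := by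
    have := hgwh z hzpq
    rw [hgz] at this
    exact (mul_eq_zero.mp this.symm).resolve_left (hw z hzpq).ne'
  refine ⟨z, hzpq, fun x hx => ?_, fun x hx => ?_⟩
  · have hxpq : x ∈ Ioo p q := ⟨hx.1, hx.2.trans hzpq.2⟩
    rw [hgwh x hxpq]
    exact mul_pos (hw x hxpq) (hhz ▸ hh hxpq hzpq hx.2)
  · have hxpq : x ∈ Ioo p q := ⟨hzpq.1.trans hx.1, hx.2⟩
    rw [hgwh x hxpq]
    exact mul_neg_of_pos_of_neg (hw x hxpq) (hhz ▸ hh hzpq hxpq hx.1)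

lemma exists_neg_pos_neg_of_unimodal {z r : ℝ} (hz : z ∈ Icc p q)
    (hf : ContinuousOn f (Icc p q)) (hmono : StrictMonoOn f (Icc p z))
    (hanti : StrictAntiOn f (Icc z q)) (hp : f p < 0) (hq : f q < 0)
    (hr : r ∈ Icc p q) (hfr : 0 < f r) :
    ∃ a b, p < a ∧ a < b ∧ b < q ∧ (∀ x ∈ Ioo p a, f x < 0) ∧
      (∀ x ∈ Ioo a b, 0 < f x) ∧ ∀ x ∈ Ioo b q, f x < 0 := by
  have hfz : 0 < f z := by
    rcases le_total r z with hrz | hzr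
    · exact hfr.trans_le (hmono.monotoneOn ⟨hr.1, hrz⟩ ⟨hz.1, le_rfl⟩ hrz)
    · exact hfr.trans_le (hanti.antitoneOn ⟨le_rfl, hz.2⟩ ⟨hzr, hr.2⟩ hzr)
  obtain ⟨a, ha, hfa⟩ :=
    intermediate_value_Icc hz.1 (hf.mono (Icc_subset_Icc_right hz.2)) ⟨hp.le, hfz.le⟩
  obtain ⟨b, hb, hfb⟩ :=
    intermediate_value_Icc' hz.2 (hf.mono (Icc_subset_Icc_left hz.1)) ⟨hq.le, hfz.le⟩
  have hpa : p < a := ha.1.lt_of_ne (by rintro rfl; linarith)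
  have haz : a < z := ha.2.lt_of_ne (by rintro rfl; linarith)
  have hzb : z < b := hb.1.lt_of_ne (by rintro rfl; linarith)
  have hbq : b < q := hb.2.lt_of_ne (by rintro rfl; linarith)
  refine ⟨a, b, hpa, haz.trans hzb, hbq, fun x hx => ?_, fun x hx => ?_, fun x hx => ?_⟩
  · exact hfa ▸ hmono ⟨hx.1.le, (hx.2.trans haz).le⟩ ⟨ha.1, ha.2⟩ hx.2
  · rcases le_total x z with hxz | hzx
    · exact hfa ▸ hmono ⟨ha.1, ha.2⟩ ⟨(hpa.trans hx.1).le, hxz⟩ hx.1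
    · exact hfb ▸ hanti ⟨hzx, (hx.2.trans hbq).le⟩ ⟨hb.1, hb.2⟩ hx.2
  · exact hfb ▸ hanti ⟨hb.1, hb.2⟩ ⟨(hzb.trans hx.1).le, hx.2.le⟩ hx.1

lemma existsUnique_zero_of_anti_mono_anti {a b : ℝ} (hpa : p < a) (hab : a < b) (hbq : b < q)
    (hf : ContinuousOn f (Icc p q)) (hanti₁ : StrictAntiOn f (Icc p a))
    (hmono : StrictMonoOn f (Icc a b)) (hanti₂ : StrictAntiOn f (Icc b q))
    (hp : f p = 0) (hq : f q = 0) :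
    ∃! x, x ∈ Ioo p q ∧ f x = 0 := by
  have hfa : f a < 0 := hp ▸ hanti₁ ⟨le_rfl, hpa.le⟩ ⟨hpa.le, le_rfl⟩ hpa
  have hfb : 0 < f b := hq ▸ hanti₂ ⟨le_rfl, hbq.le⟩ ⟨hbq.le, le_rfl⟩ hbq
  obtain ⟨x, hx, hfx⟩ := intermediate_value_Icc hab.le
    (hf.mono (Icc_subset_Icc hpa.le hbq.le)) ⟨hfa.le, hfb.le⟩
  refine ⟨x, ⟨⟨hpa.trans_le hx.1, hx.2.trans_lt hbq⟩, hfx⟩, ?_⟩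
  rintro y ⟨hy, hfy⟩
  rcases le_or_gt y a with hya | hay
  · have := hanti₁ ⟨le_rfl, hpa.le⟩ ⟨hy.1.le, hya⟩ hy.1
    linarith
  rcases le_or_gt b y with hby | hyb
  · have := hanti₂ ⟨hby, hy.2.le⟩ ⟨hbq.le, le_rfl⟩ hy.2
    linarith
  exact hmono.injOn ⟨hay.le, hyb.le⟩ hx (hfy.trans hfx.symm)

end SignPatterns

lemma hasDerivAt_sin_sq (θ : ℝ) : HasDerivAt (fun x => sin x ^ 2) (sin (2 * θ)) θ := by
  refine ((hasDerivAt_sin θ).pow 2).congr_deriv ?_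
  rw [sin_two_mul]; ring

lemma sin_two_mul_pos {θ : ℝ} (hθ : θ ∈ Ioo 0 (π / 2)) : 0 < sin (2 * θ) :=
  sin_pos_of_pos_of_lt_pi (by linarith [hθ.1]) (by linarith [hθ.2])

lemma pi_div_four_lt_three_mul_arctan_one_third : π / 4 < 3 * arctan (1 / 3) := by
  have h₂ : arctan (1 / 3) + arctan (1 / 3) = arctan (3 / 4) := by
    rw [arctan_add (by norm_num)]; norm_num
  have h₃ : arctan (3 / 4) + arctan (1 / 3) = arctan (13 / 9) := by
    rw [arctan_add (by norm_num)]; norm_num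
  have h₁ : arctan 1 < arctan (13 / 9) := arctan_strictMono (by norm_num)
  rw [arctan_one] at h₁
  linarith

namespace PhaseLamp

noncomputable def arctanTerm (θ : ℝ) : ℝ :=
  arctan (sin θ * cos θ / (1 + sin θ ^ 2))

noncomputable def residual (α θ : ℝ) : ℝ :=
  θ * cos θ ^ 2 + (1 + 3 * sin θ ^ 2) * arctanTerm θ
    - (2 * sin θ * cos θ + (π / α) * sin θ ^ 2 * cos θ ^ 2)

noncomputable def residualFactor (α θ : ℝ) : ℝ :=
  3 * arctanTerm θ - θ - (π / α) * cos (2 * θ)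

noncomputable def residualFactorDeriv (α θ : ℝ) : ℝ :=
  (2 - 12 * sin θ ^ 2) / (1 + 3 * sin θ ^ 2) + 2 * (π / α) * sin (2 * θ)

noncomputable def residualFactorDerivQuot (θ : ℝ) : ℝ :=
  (2 - 12 * sin θ ^ 2) / ((1 + 3 * sin θ ^ 2) * sin (2 * θ))

lemma hasDerivAt_arctanTerm (θ : ℝ) :
    HasDerivAt arctanTerm ((1 - 3 * sin θ ^ 2) / (1 + 3 * sin θ ^ 2)) θ := by
  have hden : (0 : ℝ) < 1 + sin θ ^ 2 := by positivity
  have hquot := ((hasDerivAt_sin θ).mul (hasDerivAt_cos θ)).div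
    ((hasDerivAt_sin_sq θ).const_add 1) hden.ne'
  refine ((hasDerivAt_arctan _).comp θ hquot).congr_deriv ?_
  have hpyth := sin_sq_add_cos_sq θ
  simp only [Pi.mul_apply, Pi.div_apply, sin_two_mul]
  field_simp
  linear_combination (1 + sin θ ^ 2) * hpyth

lemma hasDerivAt_residual (α θ : ℝ) :
    HasDerivAt (residual α) (sin (2 * θ) * residualFactor α θ) θ := by
  have hcos_sq : HasDerivAt (fun x => cos x ^ 2) (-sin (2 * θ)) θ := by
    refine ((hasDerivAt_cos θ).pow 2).congr_deriv ?_
    rw [sin_two_mul]; ring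
  have hsin_cos : HasDerivAt (fun x => sin x * cos x) (cos (2 * θ)) θ := by
    refine ((hasDerivAt_sin θ).mul (hasDerivAt_cos θ)).congr_deriv ?_
    rw [cos_two_mul, ← sin_sq_add_cos_sq θ]; ring
  have := (((hasDerivAt_id θ).mul hcos_sq).add
    ((((hasDerivAt_sin_sq θ).const_mul 3).const_add 1).mul (hasDerivAt_arctanTerm θ))).sub
    ((hsin_cos.const_mul 2).add (((hasDerivAt_sin_sq θ).mul hcos_sq).const_mul (π / α)))
  refine (this.congr_deriv ?_).congr_of_eventuallyEq (.of_forall fun x => by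
    simp only [residual, Pi.sub_apply, Pi.add_apply, Pi.mul_apply, id_eq]; ring)
  have hpos : (0 : ℝ) < 1 + 3 * sin θ ^ 2 := by positivity
  have hpyth := sin_sq_add_cos_sq θ
  simp only [residualFactor, id_eq, sin_two_mul, cos_two_mul]
  field_simp
  linear_combination (2 * cos θ * sin θ * π * α⁻¹ - 3) * hpyth

lemma hasDerivAt_residualFactor (α θ : ℝ) :
    HasDerivAt (residualFactor α) (residualFactorDeriv α θ) θ := by
  have := (((hasDerivAt_arctanTerm θ).const_mul 3).sub (hasDerivAt_id θ)).sub
    (((hasDerivAt_cos (2 * θ)).comp θ ((hasDerivAt_id θ).const_mul 2)).const_mul (π / α))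
  refine this.congr_deriv ?_
  have hpos : (0 : ℝ) < 1 + 3 * sin θ ^ 2 := by positivity
  simp only [residualFactorDeriv]
  field_simp
  ring

lemma residualFactorDeriv_eq_mul (α : ℝ) {θ : ℝ} (hθ : sin (2 * θ) ≠ 0) :
    residualFactorDeriv α θ = sin (2 * θ) * (residualFactorDerivQuot θ + 2 * (π / α)) := by
  have hpos : (0 : ℝ) < 1 + 3 * sin θ ^ 2 := by positivity
  simp only [residualFactorDeriv, residualFactorDerivQuot]
  field_simp

lemma strictAntiOn_residualFactorDerivQuot :
    StrictAntiOn residualFactorDerivQuot (Ioo 0 (π / 2)) := by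
  have hderiv : ∀ θ ∈ Ioo 0 (π / 2), HasDerivAt residualFactorDerivQuot
      ((-12 * (1 + 3 * sin θ ^ 2) * sin (2 * θ) ^ 2
        - (2 - 12 * sin θ ^ 2) * (3 * sin (2 * θ) ^ 2 + 2 * (1 + 3 * sin θ ^ 2) * cos (2 * θ)))
        / ((1 + 3 * sin θ ^ 2) * sin (2 * θ)) ^ 2) θ := by
    intro θ hθ
    have hsin2 : HasDerivAt (fun x => sin (2 * x)) (2 * cos (2 * θ)) θ := by
      simpa [mul_comm] using ((hasDerivAt_id θ).const_mul 2).sin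
    have hden : (1 + 3 * sin θ ^ 2) * sin (2 * θ) ≠ 0 :=
      mul_ne_zero (by positivity) (sin_two_mul_pos hθ).ne'
    refine ((((hasDerivAt_sin_sq θ).const_mul 12).const_sub 2).div
      ((((hasDerivAt_sin_sq θ).const_mul 3).const_add 1).mul hsin2) hden).congr_deriv ?_
    simp only [Pi.mul_apply]
    ring
  refine strictAntiOn_of_hasDerivWithinAt_neg (convex_Ioo 0 (π / 2))
    (fun θ hθ => (hderiv θ hθ).continuousAt.continuousWithinAt)
    (fun θ hθ => (hderiv θ (by simpa using hθ)).hasDerivWithinAt) fun θ hθ => ?_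
  rw [interior_Ioo] at hθ
  have hden : 0 < (1 + 3 * sin θ ^ 2) * sin (2 * θ) := by
    have := sin_two_mul_pos hθ
    positivity
  refine div_neg_of_neg_of_pos ?_ (pow_pos hden 2)
  have hsin2 : sin (2 * θ) ^ 2 = 4 * sin θ ^ 2 * (1 - sin θ ^ 2) := by
    rw [sin_two_mul, ← cos_sq']; ring
  have hcos2 : cos (2 * θ) = 1 - 2 * sin θ ^ 2 := by
    rw [cos_two_mul, cos_sq']; ring
  have hx : 0 ≤ sin θ ^ 2 := sq_nonneg _
  rw [hsin2, hcos2]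
  nlinarith [mul_nonneg hx (sq_nonneg (sin θ ^ 2 - 5 / 12))]

lemma residualFactorDeriv_sign (α : ℝ) :
    ∃ z ∈ Ioo 0 (π / 2), (∀ x ∈ Ioo 0 z, 0 < residualFactorDeriv α x) ∧
      ∀ x ∈ Ioo z (π / 2), residualFactorDeriv α x < 0 := by
  have hcont : Continuous (residualFactorDeriv α) := by
    unfold residualFactorDeriv
    fun_prop (disch := intro x; positivity)
  refine exists_pos_neg_of_eq_mul_strictAntiOn (by positivity) hcont.continuousOn
    (by norm_num [residualFactorDeriv]) (by norm_num [residualFactorDeriv, mul_div_cancel₀])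
    (fun x hx => sin_two_mul_pos hx)
    (fun x hx => residualFactorDeriv_eq_mul α (sin_two_mul_pos hx).ne')
    fun x hx y hy hxy => add_lt_add_left (strictAntiOn_residualFactorDerivQuot hx hy hxy) _

lemma residualFactor_zero (α : ℝ) : residualFactor α 0 = -(π / α) := by
  simp [residualFactor, arctanTerm]

lemma residualFactor_pi_div_two (α : ℝ) : residualFactor α (π / 2) = π / α - π / 2 := by
  simp [residualFactor, arctanTerm, mul_div_cancel₀]
  ring

lemma residualFactor_pi_div_four (α : ℝ) :
    residualFactor α (π / 4) = 3 * arctan (1 / 3) - π / 4 := by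
  have hsc : sin (π / 4) * cos (π / 4) = 1 / 2 := by
    rw [sin_pi_div_four, cos_pi_div_four, ← sq, div_pow, sq_sqrt zero_le_two]; norm_num
  have hs : sin (π / 4) ^ 2 = 1 / 2 := by
    rw [sin_pi_div_four, div_pow, sq_sqrt zero_le_two]; norm_num
  have hcos : cos (2 * (π / 4)) = 0 := by
    rw [show 2 * (π / 4) = π / 2 by ring, cos_pi_div_two]
  simp only [residualFactor, arctanTerm, hsc, hs, hcos]
  norm_num

lemma residualFactor_sign {α : ℝ} (hα : 2 < α) :
    ∃ a b, 0 < a ∧ a < b ∧ b < π / 2 ∧ (∀ x ∈ Ioo 0 a, residualFactor α x < 0) ∧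
      (∀ x ∈ Ioo a b, 0 < residualFactor α x) ∧ ∀ x ∈ Ioo b (π / 2), residualFactor α x < 0 := by
  obtain ⟨z, hz, hpos, hneg⟩ := residualFactorDeriv_sign α
  have hπα : 0 < π / α := div_pos pi_pos (by linarith)
  refine exists_neg_pos_neg_of_unimodal (r := π / 4) (Ioo_subset_Icc_self hz)
    (HasDerivAt.continuousOn fun x _ => hasDerivAt_residualFactor α x)
    (strictMonoOn_Icc_of_hasDerivAt_pos (hasDerivAt_residualFactor α) hpos)
    (strictAntiOn_Icc_of_hasDerivAt_neg (hasDerivAt_residualFactor α) hneg)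
    (by rw [residualFactor_zero]; linarith) ?_
    ⟨by positivity, by linarith [pi_pos]⟩
    (by rw [residualFactor_pi_div_four]; linarith [pi_div_four_lt_three_mul_arctan_one_third])
  rw [residualFactor_pi_div_two, sub_neg]
  exact div_lt_div_of_pos_left pi_pos two_pos hα

lemma residual_zero (α : ℝ) : residual α 0 = 0 := by
  simp [residual, arctanTerm]

lemma residual_pi_div_two (α : ℝ) : residual α (π / 2) = 0 := by
  simp [residual, arctanTerm]

lemma phaseLampEq_iff_residual_eq_zero (α θ : ℝ) : phaseLampEq α θ ↔ residual α θ = 0 :=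
  sub_eq_zero.symm

end PhaseLamp

open PhaseLamp

/-- For every `α > 2`, the equation
`θcos²θ + (1 + 3sin²θ)·arctan(sinθcosθ/(1 + sin²θ)) = 2sinθcosθ + (π/α)sin²θcos²θ`
has exactly one solution `θ` in the open interval `(0, π/2)`. -/
theorem phaseLampEq_existsUnique_solution (α : ℝ) (hα : 2 < α) :
    ∃! θ : ℝ, θ ∈ Set.Ioo 0 (Real.pi / 2) ∧ phaseLampEq α θ := by
  obtain ⟨a, b, ha, hab, hb, hneg₁, hpos, hneg₂⟩ := residualFactor_sign hα
  have hmem : ∀ {p q}, 0 ≤ p → q ≤ π / 2 → ∀ x ∈ Ioo p q, x ∈ Ioo 0 (π / 2) :=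
    fun hp hq x hx => ⟨hp.trans_lt hx.1, hx.2.trans_le hq⟩
  simp only [phaseLampEq_iff_residual_eq_zero]
  exact existsUnique_zero_of_anti_mono_anti ha hab hb
    (HasDerivAt.continuousOn fun x _ => hasDerivAt_residual α x)
    (strictAntiOn_Icc_of_hasDerivAt_neg (hasDerivAt_residual α) fun x hx =>
      mul_neg_of_pos_of_neg (sin_two_mul_pos (hmem le_rfl (hab.trans hb).le x hx)) (hneg₁ x hx))
    (strictMonoOn_Icc_of_hasDerivAt_pos (hasDerivAt_residual α) fun x hx =>
      mul_pos (sin_two_mul_pos (hmem ha.le hb.le x hx)) (hpos x hx))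
    (strictAntiOn_Icc_of_hasDerivAt_neg (hasDerivAt_residual α) fun x hx =>
      mul_neg_of_pos_of_neg (sin_two_mul_pos (hmem (ha.trans hab).le le_rfl x hx)) (hneg₂ x hx))
    (residual_zero α) (residual_pi_div_two α)
end

section
/- Let q and g be independent standard Gaussian random variables. Then for every s ∈ ℝ and every r > 0, E[min(|q| − |r·g + s·q|, 0)²] = (1/π)·[((1−s)² + r²)·(π/2 − arctan((1−s)/r)) + ((1+s)² + r²)·(π/2 − arctan((1+s)/r)) − 2r]. -/
open MeasureTheory ProbabilityTheory

/-!
The integrand `F(x, y) = min(|x| - |r y + s x|, 0)²` satisfies `F(c • p) = c² F(p)` for every real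
`c`. In polar coordinates the Gaussian weight `ρ³ e^{-ρ²/2}` integrates to `2`, so the expectation
is `π⁻¹` times the integral of `F` over the unit circle; evenness folds the circle onto the half
circle `(-π/2, π/2)`, and `t = tan θ` turns that into `2/π · ∫ F(1, t) / (1 + t²)² dt`.
Writing `min(1 - |u|, 0)² = (u - 1)₊² + (-u - 1)₊²`, the last integral reduces to
`∫ (t - a)₊² / (1 + t²)² dt`, which has the elementary antiderivative
`(1 + a²)/2 · arctan t + ((a² - 1) t/2 + a) / (1 + t²)` on `[a, ∞)`.
-/

open Real Set Filter Topology
open scoped NNReal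

lemma integrable_max_sub_sq_div_one_add_sq_sq (a : ℝ) :
    Integrable fun t : ℝ => max (t - a) 0 ^ 2 / (1 + t ^ 2) ^ 2 := by
  refine (integrable_inv_one_add_sq.const_mul (2 * a ^ 2 + 2)).mono'
    (by fun_prop : Measurable _).aestronglyMeasurable (ae_of_all _ fun t => ?_)
  have hmax : max (t - a) 0 ^ 2 ≤ (2 * a ^ 2 + 2) * (1 + t ^ 2) := by
    rcases le_total (t - a) 0 with h | h
    · rw [max_eq_right h]; norm_num; positivity
    · rw [max_eq_left h]; nlinarith [sq_nonneg (t + a), sq_nonneg (a * t)]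
  rw [norm_of_nonneg (by positivity), div_le_iff₀ (by positivity)]
  calc max (t - a) 0 ^ 2 ≤ (2 * a ^ 2 + 2) * (1 + t ^ 2) := hmax
    _ = (2 * a ^ 2 + 2) * (1 + t ^ 2)⁻¹ * (1 + t ^ 2) ^ 2 := by field_simp

lemma tendsto_linear_div_one_add_sq_atTop (b c : ℝ) :
    Tendsto (fun t : ℝ => (b * t + c) / (1 + t ^ 2)) atTop (𝓝 0) := by
  have hinv := tendsto_inv_atTop_zero (𝕜 := ℝ)
  have hlim := ((hinv.const_mul b).add ((hinv.pow 2).const_mul c)).div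
    ((hinv.pow 2).const_add 1) (by norm_num)
  simp only [mul_zero, add_zero, ne_eq, OfNat.ofNat_ne_zero, not_false_eq_true, zero_pow,
    zero_div] at hlim
  refine hlim.congr' ((eventually_ne_atTop 0).mono fun t ht => ?_)
  simp only [Pi.div_apply]
  field_simp
  ring

lemma integral_max_sub_sq_div_one_add_sq_sq (a : ℝ) :
    ∫ t, max (t - a) 0 ^ 2 / (1 + t ^ 2) ^ 2 = (1 + a ^ 2) / 2 * (π / 2 - arctan a) - a / 2 := by
  set F : ℝ → ℝ := fun t => (1 + a ^ 2) / 2 * arctan t + ((a ^ 2 - 1) / 2 * t + a) / (1 + t ^ 2)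
  have hderiv : ∀ t ∈ Ici a, HasDerivAt F (max (t - a) 0 ^ 2 / (1 + t ^ 2) ^ 2) t := by
    intro t ht
    have hrat := (((hasDerivAt_id' t).const_mul ((a ^ 2 - 1) / 2)).add_const a).div
      ((hasDerivAt_pow 2 t).const_add 1) (by positivity)
    refine ((hasDerivAt_arctan t).const_mul ((1 + a ^ 2) / 2)).add hrat |>.congr_deriv ?_
    rw [max_eq_left (sub_nonneg.mpr ht)]
    field_simp
    ring
  have hlim : Tendsto F atTop (𝓝 ((1 + a ^ 2) / 2 * (π / 2) + 0)) :=
    ((tendsto_nhds_of_tendsto_nhdsWithin tendsto_arctan_atTop).const_mul _).add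
      (tendsto_linear_div_one_add_sq_atTop _ _)
  have hzero : ∀ t ∉ Ioi a, max (t - a) 0 ^ 2 / (1 + t ^ 2) ^ 2 = 0 := fun t ht => by
    rw [max_eq_right (by simpa using ht)]; simp
  rw [← setIntegral_eq_integral_of_forall_compl_eq_zero hzero,
    integral_Ioi_of_hasDerivAt_of_tendsto' hderiv
      (integrable_max_sub_sq_div_one_add_sq_sq a).integrableOn hlim]
  simp only [F]
  field_simp
  ring

lemma min_one_sub_abs_sq (u : ℝ) :
    min (1 - |u|) 0 ^ 2 = max (u - 1) 0 ^ 2 + max (-u - 1) 0 ^ 2 := by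
  rw [← neg_sq, ← max_neg_neg, neg_sub, neg_zero]
  rcases le_total 0 u with hu | hu
  · rw [abs_of_nonneg hu, max_eq_right (by linarith : -u - 1 ≤ 0)]
    ring
  · rw [abs_of_nonpos hu, max_eq_right (by linarith : u - 1 ≤ 0)]
    ring

lemma max_mul_zero_sq {r : ℝ} (hr : 0 ≤ r) (x : ℝ) :
    max (r * x) 0 ^ 2 = r ^ 2 * max x 0 ^ 2 := by
  rw [← mul_zero r, ← mul_max_of_nonneg _ _ hr, mul_pow, mul_zero]

lemma integral_min_one_sub_abs_sq_div_one_add_sq_sq {r : ℝ} (hr : 0 < r) (s : ℝ) :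
    ∫ t, min (1 - |r * t + s|) 0 ^ 2 / (1 + t ^ 2) ^ 2 =
      (((1 - s) ^ 2 + r ^ 2) * (π / 2 - arctan ((1 - s) / r)) +
        ((1 + s) ^ 2 + r ^ 2) * (π / 2 - arctan ((1 + s) / r)) - 2 * r) / 2 := by
  set a := (1 - s) / r
  set b := (1 + s) / r
  have hsplit : ∀ t : ℝ, min (1 - |r * t + s|) 0 ^ 2 / (1 + t ^ 2) ^ 2 =
      r ^ 2 * (max (t - a) 0 ^ 2 / (1 + t ^ 2) ^ 2) +
        r ^ 2 * (max (-t - b) 0 ^ 2 / (1 + (-t) ^ 2) ^ 2) := by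
    intro t
    have ha : r * t + s - 1 = r * (t - a) := by simp only [a]; field_simp; ring
    have hb : -(r * t + s) - 1 = r * (-t - b) := by simp only [b]; field_simp; ring
    rw [min_one_sub_abs_sq, ha, hb, max_mul_zero_sq hr.le, max_mul_zero_sq hr.le, neg_sq]
    ring
  have hint := integrable_max_sub_sq_div_one_add_sq_sq
  rw [integral_congr_ae (ae_of_all _ hsplit), integral_add ((hint a).const_mul _)
      (((hint b).comp_neg).const_mul _), integral_const_mul, integral_const_mul,
    integral_neg_eq_self (fun t => max (t - b) 0 ^ 2 / (1 + t ^ 2) ^ 2),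
    integral_max_sub_sq_div_one_add_sq_sq, integral_max_sub_sq_div_one_add_sq_sq]
  simp only [a, b]
  field_simp
  ring

lemma integral_Ioo_comp_tan (f : ℝ → ℝ) :
    ∫ θ in Ioo (-(π / 2)) (π / 2), f (tan θ) = ∫ t, f t / (1 + t ^ 2) := by
  have h := integral_image_eq_integral_abs_deriv_smul measurableSet_Ioo
    (fun θ hθ => (hasDerivAt_tan_of_mem_Ioo hθ).hasDerivWithinAt) injOn_tan
    (fun t => f t / (1 + t ^ 2))
  rw [image_tan_Ioo, Measure.restrict_univ] at h
  rw [h]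
  refine setIntegral_congr_fun measurableSet_Ioo fun θ hθ => ?_
  have hcos : cos θ ≠ 0 := (cos_pos_of_mem_Ioo hθ).ne'
  rw [smul_eq_mul, abs_of_nonneg (by positivity), ← inv_one_add_tan_sq hcos]
  field_simp

lemma Function.Periodic.intervalIntegral_neg_period_period {G : ℝ → ℝ} {T : ℝ}
    (hG : Function.Periodic G T) (hint : ∀ a b, IntervalIntegrable G volume a b) :
    ∫ θ in -T..T, G θ = 2 * ∫ θ in -(T / 2)..T / 2, G θ := by
  have hleft := hG.intervalIntegral_add_eq (-T) (-(T / 2))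
  have hright := hG.intervalIntegral_add_eq 0 (-(T / 2))
  rw [neg_add_cancel] at hleft
  rw [zero_add] at hright
  rw [← intervalIntegral.integral_add_adjacent_intervals (hint (-T) 0) (hint 0 T), hleft, hright,
    show -(T / 2) + T = T / 2 by ring, two_mul]

lemma integral_Ioi_pow_three_mul_exp_neg_sq_div_two :
    ∫ ρ in Ioi (0 : ℝ), ρ ^ 3 * exp (-ρ ^ 2 / 2) = 2 := by
  have h := integral_rpow_mul_exp_neg_mul_rpow (p := 2) (q := 3) (b := 1 / 2)
    (by norm_num) (by norm_num) (by norm_num)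
  norm_num at h
  convert h using 5
  ring

lemma integral_gaussianReal_prod {m₁ m₂ : ℝ} {v₁ v₂ : ℝ≥0} (hv₁ : v₁ ≠ 0) (hv₂ : v₂ ≠ 0)
    (f : ℝ × ℝ → ℝ) :
    ∫ p, f p ∂(gaussianReal m₁ v₁).prod (gaussianReal m₂ v₂) =
      ∫ p, gaussianPDFReal m₁ v₁ p.1 * gaussianPDFReal m₂ v₂ p.2 * f p := by
  rw [gaussianReal_of_var_ne_zero _ hv₁, gaussianReal_of_var_ne_zero _ hv₂,
    prod_withDensity (measurable_gaussianPDF _ _) (measurable_gaussianPDF _ _),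
    ← Measure.volume_eq_prod, integral_withDensity_eq_integral_toReal_smul
      (by fun_prop)
      (ae_of_all _ fun _ => ENNReal.mul_lt_top gaussianPDF_lt_top gaussianPDF_lt_top)]
  simp only [ENNReal.toReal_mul, toReal_gaussianPDF, smul_eq_mul]

lemma integral_gaussianReal_prod_of_sq_homogeneous {F : ℝ × ℝ → ℝ}
    (hF : ∀ c : ℝ, 0 < c → ∀ p, F (c • p) = c ^ 2 * F p) :
    ∫ p, F p ∂(gaussianReal 0 1).prod (gaussianReal 0 1) =
      π⁻¹ * ∫ θ in Ioo (-π) π, F (cos θ, sin θ) := by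
  have hdensity : ∀ x y : ℝ, gaussianPDFReal 0 1 x * gaussianPDFReal 0 1 y =
      (2 * π)⁻¹ * exp (-(x ^ 2 + y ^ 2) / 2) := by
    intro x y
    simp only [gaussianPDFReal, NNReal.coe_one, mul_one, sub_zero]
    rw [mul_mul_mul_comm, ← mul_inv, mul_self_sqrt (by positivity), ← exp_add]
    ring_nf
  rw [integral_gaussianReal_prod one_ne_zero one_ne_zero, ← integral_comp_polarCoord_symm,
    polarCoord_target]
  calc ∫ p in Ioi 0 ×ˢ Ioo (-π) π, p.1 • (gaussianPDFReal 0 1 (polarCoord.symm p).1 *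
          gaussianPDFReal 0 1 (polarCoord.symm p).2 * F (polarCoord.symm p))
      = ∫ p in Ioi 0 ×ˢ Ioo (-π) π,
          (p.1 ^ 3 * exp (-p.1 ^ 2 / 2)) * ((2 * π)⁻¹ * F (cos p.2, sin p.2)) := by
        refine setIntegral_congr_fun (measurableSet_Ioi.prod measurableSet_Ioo) fun p hp => ?_
        have hpolar : polarCoord.symm p = p.1 • (cos p.2, sin p.2) := by
          simp [polarCoord_symm_apply]
        rw [hpolar, hF _ hp.1, Prod.smul_fst, Prod.smul_snd, smul_eq_mul, smul_eq_mul,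
          smul_eq_mul, hdensity]
        have : (p.1 * cos p.2) ^ 2 + (p.1 * sin p.2) ^ 2 = p.1 ^ 2 := by
          linear_combination p.1 ^ 2 * sin_sq_add_cos_sq p.2
        rw [this]
        ring
    _ = π⁻¹ * ∫ θ in Ioo (-π) π, F (cos θ, sin θ) := by
        rw [Measure.volume_eq_prod, ← Measure.prod_restrict,
          integral_prod_mul (fun ρ : ℝ => ρ ^ 3 * exp (-ρ ^ 2 / 2))
            (fun θ : ℝ => (2 * π)⁻¹ * F (cos θ, sin θ)),
          integral_Ioi_pow_three_mul_exp_neg_sq_div_two, integral_const_mul, mul_inv]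
        ring

lemma integral_gaussianReal_prod_of_even_sq_homogeneous {F : ℝ × ℝ → ℝ} (hFc : Continuous F)
    (hF : ∀ (c : ℝ) p, F (c • p) = c ^ 2 * F p) :
    ∫ p, F p ∂(gaussianReal 0 1).prod (gaussianReal 0 1) =
      2 / π * ∫ t, F (1, t) / (1 + t ^ 2) ^ 2 := by
  set G : ℝ → ℝ := fun θ => F (cos θ, sin θ)
  have hper : Function.Periodic G π := fun θ => by
    simpa [G, cos_add_pi, sin_add_pi] using hF (-1) (cos θ, sin θ)
  have hGc : Continuous G := by fun_prop
  have hIoo : ∀ a b, a ≤ b → ∫ θ in Ioo a b, G θ = ∫ θ in a..b, G θ := fun a b hab => by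
    rw [intervalIntegral.integral_of_le hab, integral_Ioc_eq_integral_Ioo]
  have hhalf : ∫ θ in Ioo (-(π / 2)) (π / 2), G θ = ∫ t, F (1, t) / (1 + t ^ 2) ^ 2 := by
    have hcomp := integral_Ioo_comp_tan fun t => F (1, t) / (1 + t ^ 2)
    simp only [div_div, ← sq] at hcomp
    rw [← hcomp]
    refine setIntegral_congr_fun measurableSet_Ioo fun θ hθ => ?_
    have hcos : 0 < cos θ := cos_pos_of_mem_Ioo hθ
    have hGθ : G θ = cos θ ^ 2 * F (1, tan θ) := by
      rw [← hF, Prod.smul_mk, smul_eq_mul, smul_eq_mul, mul_one, mul_comm, tan_mul_cos hcos.ne']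
    rw [hGθ, div_eq_mul_inv, inv_one_add_tan_sq hcos.ne', mul_comm]
  rw [integral_gaussianReal_prod_of_sq_homogeneous fun c _ => hF c,
    hIoo _ _ (by linarith [pi_pos]),
    hper.intervalIntegral_neg_period_period fun a b => hGc.intervalIntegrable a b,
    ← hIoo _ _ (by linarith [pi_pos]), hhalf]
  ring

lemma ProbabilityTheory.IndepFun.integral_comp_prodMk {Ω α β E : Type*} [MeasurableSpace Ω]
    [MeasurableSpace α] [MeasurableSpace β] [NormedAddCommGroup E] [NormedSpace ℝ E] {μ : Measure Ω}
    [IsFiniteMeasure μ] {X : Ω → α} {Y : Ω → β} (hind : IndepFun X Y μ) (hX : AEMeasurable X μ)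
    (hY : AEMeasurable Y μ) {F : α × β → E}
    (hF : AEStronglyMeasurable F ((μ.map X).prod (μ.map Y))) :
    ∫ ω, F (X ω, Y ω) ∂μ = ∫ p, F p ∂(μ.map X).prod (μ.map Y) := by
  rw [← (indepFun_iff_map_prod_eq_prod_map_map hX hY).mp hind] at hF ⊢
  exact (integral_map (hX.prodMk hY) hF).symm

/-- Let `q` and `g` be independent standard Gaussian random
variables.  Then for every `s ∈ ℝ` and every `r > 0`,
`E[min(|q| − |r·g + s·q|, 0)²]
  = (1/π)·[((1−s)² + r²)(π/2 − arctan((1−s)/r))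
           + ((1+s)² + r²)(π/2 − arctan((1+s)/r)) − 2r]`. -/
theorem expectation_min_sq_gaussian {Ω : Type*} [MeasurableSpace Ω]
    (μ : Measure Ω) [IsProbabilityMeasure μ] (q g : Ω → ℝ)
    (hq : Measurable q) (hg : Measurable g) (hind : IndepFun q g μ)
    (hqd : μ.map q = gaussianReal 0 1) (hgd : μ.map g = gaussianReal 0 1)
    (s r : ℝ) (hr : 0 < r) :
    ∫ ω, (min (|q ω| - |r * g ω + s * q ω|) 0) ^ 2 ∂μ =
      (1 / Real.pi) *
        (((1 - s) ^ 2 + r ^ 2) * (Real.pi / 2 - Real.arctan ((1 - s) / r)) +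
          ((1 + s) ^ 2 + r ^ 2) * (Real.pi / 2 - Real.arctan ((1 + s) / r)) -
          2 * r) := by
  set F : ℝ × ℝ → ℝ := fun p => min (|p.1| - |r * p.2 + s * p.1|) 0 ^ 2
  have hFc : Continuous F := by fun_prop
  have hF : ∀ (c : ℝ) p, F (c • p) = c ^ 2 * F p := fun c p => by
    have hscale : |c * p.1| - |r * (c * p.2) + s * (c * p.1)| =
        |c| * (|p.1| - |r * p.2 + s * p.1|) := by
      rw [show r * (c * p.2) + s * (c * p.1) = c * (r * p.2 + s * p.1) by ring, abs_mul, abs_mul]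
      ring
    simp only [F, Prod.smul_fst, Prod.smul_snd, smul_eq_mul]
    rw [hscale, ← mul_zero |c|, ← mul_min_of_nonneg _ _ (abs_nonneg c), mul_pow, sq_abs, mul_zero]
  calc ∫ ω, (min (|q ω| - |r * g ω + s * q ω|) 0) ^ 2 ∂μ
      = ∫ p, F p ∂(μ.map q).prod (μ.map g) :=
        hind.integral_comp_prodMk hq.aemeasurable hg.aemeasurable hFc.aestronglyMeasurable
    _ = 2 / π * ∫ t, min (1 - |r * t + s|) 0 ^ 2 / (1 + t ^ 2) ^ 2 := by
        simp [hqd, hgd, integral_gaussianReal_prod_of_even_sq_homogeneous hFc hF, F]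
    _ = _ := by
        rw [integral_min_one_sub_abs_sq_div_one_add_sq_sq hr]
        ring
end

section
/- Fix α > 2. For s ∈ ℝ, the set {r ≥ 0 : α·c_d(s,r) ≤ r²} is nonempty if and only if |s| ≤ 1. -/
/-!
If `|s| ≤ 1`, then `r = 0` is feasible: `|s q| ≤ |q|` makes the integrand vanish.

If `|s| > 1`, then for every `q, g` one of `|± r g + s q|` equals `r |g| + |s| |q|`, and for that
sign `min(|q| - |± r g + s q|, 0)² ≥ ((|s| - 1) |q| + r |g|)² ≥ (|s| - 1)² q² + r² g²`.
Since `g ↦ -g` preserves the Gaussian law, averaging the two signs gives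
`c_d(s, r) ≥ ((|s| - 1)² + r²) / 2`, hence `α c_d(s, r) > r²` for every `r ≥ 0` once `α > 2`.
-/

open MeasureTheory ProbabilityTheory

/-- `c_d(s,r) = E[min(|q| − |r·g + s·q|, 0)²]` for independent standard
Gaussians `q, g`. -/
noncomputable def cd (s r : ℝ) : ℝ :=
  ∫ p : ℝ × ℝ, (min (|p.1| - |r * p.2 + s * p.1|) 0) ^ 2
    ∂((gaussianReal 0 1).prod (gaussianReal 0 1))

open scoped NNReal

instance isNegInvariant_gaussianReal_zero (v : ℝ≥0) : (gaussianReal 0 v).IsNegInvariant :=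
  ⟨by simpa [Measure.neg_def] using gaussianReal_map_neg (μ := 0) (v := v)⟩

lemma integral_sq_gaussianReal_zero (v : ℝ≥0) : ∫ x, x ^ 2 ∂gaussianReal 0 v = v := by
  rw [← variance_id_gaussianReal (μ := 0) (v := v),
    variance_of_integral_eq_zero measurable_id.aemeasurable integral_id_gaussianReal]
  rfl

lemma measurePreserving_prodMap_id_neg (μ ν : Measure ℝ) [SFinite μ] [SFinite ν]
    [ν.IsNegInvariant] : MeasurePreserving (Prod.map id Neg.neg) (μ.prod ν) (μ.prod ν) :=
  (MeasurePreserving.id μ).prod (Measure.measurePreserving_neg ν)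

lemma abs_add_eq_or_abs_neg_add_eq (a b : ℝ) : |a + b| = |a| + |b| ∨ |-a + b| = |a| + |b| := by
  rw [abs_add_eq_add_abs_iff, ← abs_neg a, abs_add_eq_add_abs_iff, neg_nonneg, neg_nonpos]
  rcases le_total 0 a with ha | ha <;> rcases le_total 0 b with hb | hb <;> tauto

def cdIntegrand (s r : ℝ) (p : ℝ × ℝ) : ℝ := (min (|p.1| - |r * p.2 + s * p.1|) 0) ^ 2

lemma cdIntegrand_nonneg (s r : ℝ) (p : ℝ × ℝ) : 0 ≤ cdIntegrand s r p := sq_nonneg _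

lemma cd_eq_integral_cdIntegrand (s r : ℝ) :
    cd s r = ∫ p, cdIntegrand s r p ∂(gaussianReal 0 1).prod (gaussianReal 0 1) :=
  rfl

lemma cdIntegrand_le_sq (s r : ℝ) (p : ℝ × ℝ) : cdIntegrand s r p ≤ (r * p.2 + s * p.1) ^ 2 := by
  have h₁ : -|r * p.2 + s * p.1| ≤ min (|p.1| - |r * p.2 + s * p.1|) 0 :=
    le_min (by linarith [abs_nonneg p.1]) (by simp)
  have h₂ : min (|p.1| - |r * p.2 + s * p.1|) 0 ≤ 0 := min_le_right _ _
  rw [cdIntegrand, ← sq_abs (r * p.2 + s * p.1)]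
  nlinarith

lemma integrable_cdIntegrand {μ ν : Measure ℝ} [IsFiniteMeasure μ] [IsFiniteMeasure ν]
    (hμ : MemLp id 2 μ) (hν : MemLp id 2 ν) (s r : ℝ) :
    Integrable (cdIntegrand s r) (μ.prod ν) := by
  have hL2 : MemLp (fun p : ℝ × ℝ => r * p.2 + s * p.1) 2 (μ.prod ν) :=
    ((hν.comp_snd μ).const_mul r).add ((hμ.comp_fst ν).const_mul s)
  refine hL2.integrable_sq.mono' (by unfold cdIntegrand; fun_prop) (ae_of_all _ fun p => ?_)
  rw [Real.norm_of_nonneg (cdIntegrand_nonneg s r p)]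
  exact cdIntegrand_le_sq s r p

lemma sq_le_min_sq_of_abs_add_abs_le {s r q g X : ℝ} (hs : 1 ≤ |s|) (hr : 0 ≤ r)
    (hX : |r * g| + |s * q| ≤ X) :
    (|s| - 1) ^ 2 * q ^ 2 + r ^ 2 * g ^ 2 ≤ (min (|q| - X) 0) ^ 2 := by
  rw [abs_mul, abs_mul, abs_of_nonneg hr] at hX
  have hq := abs_nonneg q
  have hg := abs_nonneg g
  have hm : min (|q| - X) 0 ≤ -((|s| - 1) * |q| + r * |g|) :=
    (min_le_left _ _).trans (by linarith)
  have ht : 0 ≤ (|s| - 1) * |q| + r * |g| := by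
    have := sub_nonneg.2 hs
    positivity
  calc (|s| - 1) ^ 2 * q ^ 2 + r ^ 2 * g ^ 2
      ≤ ((|s| - 1) * |q| + r * |g|) ^ 2 := by
        nlinarith [sq_abs q, sq_abs g, mul_nonneg (mul_nonneg (sub_nonneg.2 hs) hq)
          (mul_nonneg hr hg)]
    _ ≤ (min (|q| - X) 0) ^ 2 := by nlinarith

lemma sq_le_cdIntegrand_add_cdIntegrand_neg {s r : ℝ} (hs : 1 ≤ |s|) (hr : 0 ≤ r) (q g : ℝ) :
    (|s| - 1) ^ 2 * q ^ 2 + r ^ 2 * g ^ 2 ≤ cdIntegrand s r (q, g) + cdIntegrand s r (q, -g) := by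
  rcases abs_add_eq_or_abs_neg_add_eq (r * g) (s * q) with h | h
  · exact (sq_le_min_sq_of_abs_add_abs_le hs hr h.ge).trans
      (le_add_of_nonneg_right (cdIntegrand_nonneg s r _))
  · have := sq_le_min_sq_of_abs_add_abs_le (q := q) hs hr h.ge
    rw [← mul_neg] at this
    exact this.trans (le_add_of_nonneg_left (cdIntegrand_nonneg s r _))

lemma le_integral_cdIntegrand {μ ν : Measure ℝ} [IsProbabilityMeasure μ] [IsProbabilityMeasure ν]
    [ν.IsNegInvariant] (hμ : MemLp id 2 μ) (hν : MemLp id 2 ν) {s r : ℝ} (hs : 1 ≤ |s|)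
    (hr : 0 ≤ r) :
    ((|s| - 1) ^ 2 * ∫ x, x ^ 2 ∂μ + r ^ 2 * ∫ y, y ^ 2 ∂ν) / 2 ≤
      ∫ p, cdIntegrand s r p ∂μ.prod ν := by
  have hf := integrable_cdIntegrand hμ hν s r
  have hneg := measurePreserving_prodMap_id_neg μ ν
  have hfneg : Integrable (fun p : ℝ × ℝ => cdIntegrand s r (p.1, -p.2)) (μ.prod ν) :=
    hneg.integrable_comp_of_integrable hf
  have hsymm : ∫ p, cdIntegrand s r (p.1, -p.2) ∂μ.prod ν = ∫ p, cdIntegrand s r p ∂μ.prod ν :=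
    hneg.integral_comp (MeasurableEmbedding.id.prodMap (MeasurableEquiv.neg ℝ).measurableEmbedding)
      (cdIntegrand s r)
  have hfst : Integrable (fun p : ℝ × ℝ => (|s| - 1) ^ 2 * p.1 ^ 2) (μ.prod ν) :=
    (hμ.comp_fst ν).integrable_sq.const_mul _
  have hsnd : Integrable (fun p : ℝ × ℝ => r ^ 2 * p.2 ^ 2) (μ.prod ν) :=
    (hν.comp_snd μ).integrable_sq.const_mul _
  have hmono : ∫ p, ((|s| - 1) ^ 2 * p.1 ^ 2 + r ^ 2 * p.2 ^ 2) ∂μ.prod ν ≤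
      ∫ p, (cdIntegrand s r p + cdIntegrand s r (p.1, -p.2)) ∂μ.prod ν :=
    integral_mono (hfst.add hsnd) (hf.add hfneg)
      fun p => sq_le_cdIntegrand_add_cdIntegrand_neg hs hr p.1 p.2
  rw [integral_add hf hfneg, hsymm, integral_add hfst hsnd, integral_const_mul, integral_const_mul,
    integral_fun_fst (fun x => x ^ 2), integral_fun_snd (fun y => y ^ 2)] at hmono
  simp only [probReal_univ, one_smul] at hmono
  linarith

lemma add_sq_div_two_le_cd {s r : ℝ} (hs : 1 ≤ |s|) (hr : 0 ≤ r) :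
    ((|s| - 1) ^ 2 + r ^ 2) / 2 ≤ cd s r := by
  simpa [integral_sq_gaussianReal_zero, cd_eq_integral_cdIntegrand] using
    le_integral_cdIntegrand (memLp_id_gaussianReal (μ := 0) (v := 1) 2)
      (memLp_id_gaussianReal (μ := 0) (v := 1) 2) hs hr

lemma cd_zero_of_abs_le_one {s : ℝ} (hs : |s| ≤ 1) : cd s 0 = 0 := by
  have hzero : ∀ p : ℝ × ℝ, cdIntegrand s 0 p = 0 := fun p => by
    have : |s| * |p.1| ≤ |p.1| := mul_le_of_le_one_left (abs_nonneg _) hs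
    simp [cdIntegrand, abs_mul, this]
  simp [cd_eq_integral_cdIntegrand, hzero]

/-- Fix `α > 2`.  For `s ∈ ℝ`, the set
`{r ≥ 0 : α·c_d(s,r) ≤ r²}` is nonempty if and only if `|s| ≤ 1`. -/
theorem feasibility_iff_abs_le_one (α : ℝ) (hα : 2 < α) (s : ℝ) :
    {r : ℝ | 0 ≤ r ∧ α * cd s r ≤ r ^ 2}.Nonempty ↔ |s| ≤ 1 := by
  constructor
  · rintro ⟨r, hr, hfeasible⟩
    by_contra! hs
    have hcd := add_sq_div_two_le_cd hs.le hr
    have hgap : 0 < (|s| - 1) ^ 2 := by nlinarith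
    nlinarith [mul_le_mul_of_nonneg_left hcd (by linarith : (0 : ℝ) ≤ α)]
  · intro hs
    exact ⟨0, le_rfl, by simp [cd_zero_of_abs_le_one hs]⟩
end

section
/- Let c ∈ ℝᵐ (m ≥ 1) and ρ ≥ 0. Then min{cᵀv : v ∈ ℝᵐ, v ≥ 0 componentwise, ‖v‖₂ = ρ} = ρ·h(c), where h(c) = −‖c ∧ 0‖₂ if min_i c_i ≤ 0 and h(c) = min_i c_i otherwise; here c ∧ 0 denotes the vector with entries min(c_i, 0). -/
/-- The function `h : ℝᵐ → ℝ` from the auxiliary-optimization analysis: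
`h(c) = −‖c ∧ 0‖₂` if `min_i c_i ≤ 0`, and `h(c) = min_i c_i` otherwise,
where `c ∧ 0` has entries `min(c_i, 0)`. -/
noncomputable def hFun {m : ℕ} (c : Fin m → ℝ) : ℝ :=
  if (⨅ i, c i) ≤ 0 then -Real.sqrt (∑ i, min (c i) 0 ^ 2) else ⨅ i, c i

/-- Let `c ∈ ℝᵐ` (`m ≥ 1`) and `ρ ≥ 0`.  Then
`min{cᵀv : v ≥ 0 componentwise, ‖v‖₂ = ρ} = ρ·h(c)`. -/
theorem min_dot_over_nonneg_sphere (m : ℕ) (hm : 0 < m) (c : Fin m → ℝ)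
    (ρ : ℝ) (hρ : 0 ≤ ρ) :
    IsLeast {t : ℝ | ∃ v : Fin m → ℝ, (∀ i, 0 ≤ v i) ∧
        Real.sqrt (∑ i, v i ^ 2) = ρ ∧ t = ∑ i, c i * v i}
      (ρ * hFun c) := by
  have hne : Nonempty (Fin m) := ⟨⟨0, hm⟩⟩
  obtain ⟨i₀, hi₀⟩ := Finite.exists_min c
  have hμ : (⨅ i, c i) = c i₀ :=
    le_antisymm (ciInf_le (Finite.bddBelow_range c) i₀) (le_ciInf hi₀)
  set s := Real.sqrt (∑ i, min (c i) 0 ^ 2) with hs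
  have hsumnn : (0:ℝ) ≤ ∑ i, min (c i) 0 ^ 2 :=
    Finset.sum_nonneg fun i _ => sq_nonneg _
  have hs0 : 0 ≤ s := Real.sqrt_nonneg _
  have hssq : s ^ 2 = ∑ i, min (c i) 0 ^ 2 := Real.sq_sqrt hsumnn
  have hcmin : ∀ i, c i * min (c i) 0 = min (c i) 0 ^ 2 := by
    intro i
    rcases le_or_gt (c i) 0 with h | h
    · rw [min_eq_left h]; ring
    · rw [min_eq_right h.le]; ring
  constructor
  · -- membership
    by_cases hc : (⨅ i, c i) ≤ 0
    · have hh : hFun c = -s := by rw [hFun, if_pos hc]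
      by_cases hsz : s = 0
      · -- all negative parts vanish, c i₀ = 0
        have hsum0 : (∑ i, min (c i) 0 ^ 2) = 0 := by
          have := hssq; rw [hsz] at this; simpa using this.symm
        have hci : ∀ i, 0 ≤ c i := by
          intro i
          have h0 : min (c i) 0 ^ 2 = 0 :=
            (Finset.sum_eq_zero_iff_of_nonneg fun j _ => sq_nonneg _).1 hsum0 i
              (Finset.mem_univ i)
          have : min (c i) 0 = 0 := by
            exact pow_eq_zero_iff (n := 2) (by norm_num) |>.1 h0
          nlinarith [min_le_left (c i) (0:ℝ), this]
        have hc0 : c i₀ = 0 := le_antisymm (hμ ▸ hc) (hci i₀)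
        refine ⟨fun i => if i = i₀ then ρ else 0, ?_, ?_, ?_⟩
        · intro i; dsimp only; split <;> simp [hρ]
        · rw [Finset.sum_eq_single i₀] <;> simp_all [Real.sqrt_sq hρ]
        · rw [hh, Finset.sum_eq_single i₀] <;> simp_all
      · have hspos : 0 < s := lt_of_le_of_ne hs0 (Ne.symm hsz)
        refine ⟨fun i => ρ * (-(min (c i) 0)) / s, ?_, ?_, ?_⟩
        · intro i
          have : min (c i) 0 ≤ 0 := min_le_right _ _
          have : 0 ≤ -(min (c i) 0) := by linarith
          positivity
        · have : (∑ i, (ρ * (-(min (c i) 0)) / s) ^ 2)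
              = ρ ^ 2 / s ^ 2 * ∑ i, min (c i) 0 ^ 2 := by
            rw [Finset.mul_sum]
            refine Finset.sum_congr rfl fun i _ => ?_
            field_simp
          rw [this, ← hssq]
          have h2 : ρ ^ 2 / s ^ 2 * s ^ 2 = ρ ^ 2 := by field_simp
          rw [h2, Real.sqrt_sq hρ]
        · rw [hh]
          have : (∑ i, c i * (ρ * (-(min (c i) 0)) / s))
              = -(ρ / s) * ∑ i, min (c i) 0 ^ 2 := by
            rw [Finset.mul_sum]
            refine Finset.sum_congr rfl fun i _ => ?_
            rw [← hcmin i]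
            field_simp
          rw [this, ← hssq]; field_simp
    · have hh : hFun c = c i₀ := by rw [hFun, if_neg hc, hμ]
      refine ⟨fun i => if i = i₀ then ρ else 0, ?_, ?_, ?_⟩
      · intro i; dsimp only; split <;> simp [hρ]
      · rw [Finset.sum_eq_single i₀] <;> simp_all [Real.sqrt_sq hρ]
      · rw [hh, Finset.sum_eq_single i₀] <;> simp_all [mul_comm]
  · -- lower bound
    rintro t ⟨v, hv0, hvn, rfl⟩
    have hvsum : (0:ℝ) ≤ ∑ i, v i ^ 2 := Finset.sum_nonneg fun i _ => sq_nonneg _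
    have hρsq : ρ ^ 2 = ∑ i, v i ^ 2 := by rw [← hvn, Real.sq_sqrt hvsum]
    by_cases hc : (⨅ i, c i) ≤ 0
    · rw [hFun, if_pos hc]
      have h1 : (∑ i, min (c i) 0 * v i) ≤ ∑ i, c i * v i :=
        Finset.sum_le_sum fun i _ => mul_le_mul_of_nonneg_right (min_le_left _ _) (hv0 i)
      have hcs : (∑ i, min (c i) 0 * v i) ^ 2 ≤
          (∑ i, min (c i) 0 ^ 2) * ∑ i, v i ^ 2 := by
        exact Finset.sum_mul_sq_le_sq_mul_sq Finset.univ (fun i => min (c i) 0) v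
      have h2 : -(s * ρ) ≤ ∑ i, min (c i) 0 * v i := by
        have hsr : (∑ i, min (c i) 0 * v i) ^ 2 ≤ (s * ρ) ^ 2 := by
          rw [mul_pow, hssq, hρsq]; exact hcs
        nlinarith [abs_nonneg (∑ i, min (c i) 0 * v i),
          neg_abs_le (∑ i, min (c i) 0 * v i), sq_abs (∑ i, min (c i) 0 * v i),
          mul_nonneg hs0 hρ]
      nlinarith
    · rw [hFun, if_neg hc, hμ]
      have hcpos : 0 < c i₀ := by rw [← hμ]; linarith [not_le.1 hc]
      have h1 : c i₀ * ∑ i, v i ≤ ∑ i, c i * v i := by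
        rw [Finset.mul_sum]
        exact Finset.sum_le_sum fun i _ => mul_le_mul_of_nonneg_right (hi₀ i) (hv0 i)
      have h2 : ρ ≤ ∑ i, v i := by
        have hvs : (0:ℝ) ≤ ∑ i, v i := Finset.sum_nonneg fun i _ => hv0 i
        have : ∑ i, v i ^ 2 ≤ (∑ i, v i) ^ 2 := by
          rw [sq (∑ i, v i), Finset.mul_sum]
          refine Finset.sum_le_sum fun i _ => ?_
          rw [sq]
          exact mul_le_mul_of_nonneg_right
            (Finset.single_le_sum (fun j _ => hv0 j) (Finset.mem_univ i)) (hv0 i)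
        nlinarith
      nlinarith
end

section
/- Let η, h ∈ ℝⁿ with ηᵀh = 0 and ‖h‖₂ = 1, let r > 0 and let c ∈ [0, r], and assume the set {x ∈ ℝⁿ : ‖x‖₂ = r, hᵀx ≥ c} is nonempty. Then max{ηᵀx : x ∈ ℝⁿ, ‖x‖₂ = r, hᵀx ≥ c} = ‖η‖₂·√(r² − c²). -/
open scoped RealInnerProductSpace

/-- Let `η, h ∈ ℝⁿ` with `ηᵀh = 0` and `‖h‖₂ = 1`, let `r > 0`,
`c ∈ [0, r]`, and assume `{x : ‖x‖₂ = r, hᵀx ≥ c}` is nonempty.  Then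
`max{ηᵀx : ‖x‖₂ = r, hᵀx ≥ c} = ‖η‖₂·√(r² − c²)`. -/
theorem max_inner_over_sphere_cap (n : ℕ) (η h : EuclideanSpace ℝ (Fin n))
    (horth : ⟪η, h⟫ = 0) (hh : ‖h‖ = 1) (r c : ℝ) (hr : 0 < r)
    (hc : c ∈ Set.Icc 0 r)
    (hne : {x : EuclideanSpace ℝ (Fin n) | ‖x‖ = r ∧ c ≤ ⟪h, x⟫}.Nonempty) :
    IsGreatest {t : ℝ | ∃ x : EuclideanSpace ℝ (Fin n),
        ‖x‖ = r ∧ c ≤ ⟪h, x⟫ ∧ t = ⟪η, x⟫}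
      (‖η‖ * Real.sqrt (r ^ 2 - c ^ 2)) := by
  obtain ⟨hc0, hcr⟩ := hc
  have hrc : (0:ℝ) ≤ r ^ 2 - c ^ 2 := by nlinarith
  set s := Real.sqrt (r ^ 2 - c ^ 2) with hs_def
  have hs0 : 0 ≤ s := Real.sqrt_nonneg _
  have hs2 : s ^ 2 = r ^ 2 - c ^ 2 := Real.sq_sqrt hrc
  have hηh : ⟪h, η⟫ = 0 := by rw [real_inner_comm]; exact horth
  constructor
  · -- membership
    by_cases hη : η = 0
    · obtain ⟨x, hx1, hx2⟩ := hne
      exact ⟨x, hx1, hx2, by simp [hη]⟩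
    · have hηn : (0:ℝ) < ‖η‖ := norm_pos_iff.mpr hη
      refine ⟨c • h + (s / ‖η‖) • η, ?_, ?_, ?_⟩
      · have hn2 : ‖c • h + (s / ‖η‖) • η‖ ^ 2 = r ^ 2 := by
          rw [norm_add_sq_real]
          rw [real_inner_smul_left, real_inner_smul_right, hηh]
          simp only [norm_smul, Real.norm_eq_abs, mul_pow]
          rw [abs_of_nonneg hc0, abs_of_nonneg (by positivity : (0:ℝ) ≤ s / ‖η‖), hh]
          field_simp
          nlinarith
        have h1 : ‖c • h + (s / ‖η‖) • η‖ ≥ 0 := norm_nonneg _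
        nlinarith
      · rw [inner_add_right, real_inner_smul_right, real_inner_smul_right,
          real_inner_self_eq_norm_sq, hh, hηh]
        simp
      · rw [inner_add_right, real_inner_smul_right, real_inner_smul_right,
          horth, real_inner_self_eq_norm_sq]
        field_simp
        ring
  · rintro t ⟨x, hx, hcx, rfl⟩
    set y : EuclideanSpace ℝ (Fin n) := x - ⟪h, x⟫ • h with hy_def
    have hhy : ⟪h, y⟫ = 0 := by
      rw [hy_def, inner_sub_right, real_inner_smul_right,
        real_inner_self_eq_norm_sq, hh]
      ring
    have hηx : ⟪η, x⟫ = ⟪η, y⟫ := by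
      rw [hy_def, inner_sub_right, real_inner_smul_right, horth]
      ring
    have hy2 : ‖y‖ ^ 2 = r ^ 2 - ⟪h, x⟫ ^ 2 := by
      rw [hy_def, norm_sub_sq_real, real_inner_smul_right, norm_smul,
        Real.norm_eq_abs, mul_pow, sq_abs, hh, hx, real_inner_comm x h]
      ring
    have hxc : ⟪h, x⟫ ^ 2 ≥ c ^ 2 := by nlinarith
    have hyle : ‖y‖ ≤ s := by
      rw [hs_def]
      rw [show ‖y‖ = Real.sqrt (‖y‖ ^ 2) by rw [Real.sqrt_sq (norm_nonneg _)]]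
      exact Real.sqrt_le_sqrt (by nlinarith)
    calc ⟪η, x⟫ = ⟪η, y⟫ := hηx
      _ ≤ ‖η‖ * ‖y‖ := real_inner_le_norm _ _
      _ ≤ ‖η‖ * s := by
          exact mul_le_mul_of_nonneg_left hyle (norm_nonneg _)
end
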